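/- arXiv:2505.02962 — 3 statements merged into one kernel-verified Lean document; each statement's English description precedes it below -/
import Mathlib

section
/- Let U ⊆ ℝ² be open and w : U → ℝ a smooth solution of the reduced equation with ∂₁∂₂²w ≠ 0 on U. Write ζ := ∂₁∂₂w + ½(∂₂²w)². Then: (i) the pair F¹ := (∂₂²w)⁵/(24·∂₁∂₂²w) + ½(∂₂w)(∂₂²w)², F² := (∂₂²w)⁶/(24·∂₁∂₂²w) − z₂ζ² + (1/3)(∂₂w)(∂₂²w)³ + (∂₁w)·ζ satisfies ∂₁F¹ + ∂₂F² = 0 on U; and (ii) the pair F¹ := −((∂₂²w)⁵/(24·∂₁∂₂²w))·(z₁ + ∂₂²w/(3·∂₁∂₂²w)) − ½(∂₂w)·(z₁(∂₂²w)² + ∂₂w), F² := −((∂₂²w)⁶/(24·∂₁∂₂²w))·(z₁ + ∂₂²w/(3·∂₁∂₂²w)) + z₁z₂ζ² − (1/3)z₁(∂₂w)(∂₂²w)³ − z₁(∂₁w)·ζ + w·ζ satisfies ∂₁F¹ + ∂₂F² = 0 on U. -/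
/-- First-coordinate partial derivative of a function on `ℝ²`. -/
noncomputable def d1 (f : ℝ × ℝ → ℝ) (p : ℝ × ℝ) : ℝ := deriv (fun s => f (s, p.2)) p.1

/-- Second-coordinate partial derivative of a function on `ℝ²`. -/
noncomputable def d2 (f : ℝ × ℝ → ℝ) (p : ℝ × ℝ) : ℝ := deriv (fun s => f (p.1, s)) p.2

/-- `w` is a smooth solution of the reduced equation `∂₁∂₂²w + (∂₂²w)·(∂₂³w) = 0` on `U`. -/
def IsRedSolOn (w : ℝ × ℝ → ℝ) (U : Set (ℝ × ℝ)) : Prop :=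
  ContDiffOn ℝ (⊤ : ℕ∞) w U ∧
    ∀ p ∈ U, d1 (d2 (d2 w)) p + d2 (d2 w) p * d2 (d2 (d2 w)) p = 0

/-- `h` is a smooth solution of the inviscid Burgers equation `∂₁h + h·∂₂h = 0` on `U`. -/
def IsBurgersSolOn (h : ℝ × ℝ → ℝ) (U : Set (ℝ × ℝ)) : Prop :=
  ContDiffOn ℝ (⊤ : ℕ∞) h U ∧ ∀ p ∈ U, d1 h p + h p * d2 h p = 0

/-- The lowest-order `z₂`-integral `ζ = ∂₁∂₂w + ½(∂₂²w)²` of the reduced equation. -/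
noncomputable def zetaInt (w : ℝ × ℝ → ℝ) (p : ℝ × ℝ) : ℝ :=
  d1 (d2 w) p + (1 / 2) * (d2 (d2 w) p) ^ 2

/-- `θ⁰ = z₂ − z₁·∂₂²w`. -/
noncomputable def theta0 (w : ℝ × ℝ → ℝ) (p : ℝ × ℝ) : ℝ := p.2 - p.1 * d2 (d2 w) p

/-- `θ¹ = ∂₂²w/∂₁∂₂²w + z₁`. -/
noncomputable def theta1 (w : ℝ × ℝ → ℝ) (p : ℝ × ℝ) : ℝ :=
  d2 (d2 w) p / d1 (d2 (d2 w)) p + p.1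

/-- `θ² = (∂₂²w/∂₁∂₂²w)·∂₂θ¹`. -/
noncomputable def theta2 (w : ℝ × ℝ → ℝ) (p : ℝ × ℝ) : ℝ :=
  d2 (d2 w) p / d1 (d2 (d2 w)) p * d2 (theta1 w) p

/-- `f` satisfies the generalized-symmetry condition
`∂₂(∂₁(∂₂f) + (∂₂²w)·∂₂(∂₂f)) = 0` of the reduced equation along the solution `w` on `U`. -/
def IsGenSymCharOn (w f : ℝ × ℝ → ℝ) (U : Set (ℝ × ℝ)) : Prop :=
  ∀ p ∈ U, d2 (fun q => d1 (d2 f) q + d2 (d2 w) q * d2 (d2 f) q) p = 0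

/-!
Both divergences are computed at a point `p` by the chain rule along the coordinate slices through
`p`, which leaves a rational expression in the derivatives of `w` at `p`. It vanishes once three
facts are substituted: `ζ` does not depend on `z₂` (its `∂₂` is the left-hand side of the equation,
after commuting `∂₂` past `∂₁`); the equation itself, `∂₁∂₂²w = -∂₂²w · ∂₂³w`; and its `∂₁`- and
`∂₂`-derivatives, which express `∂₁²∂₂²w` and `∂₂∂₁∂₂²w`. Since `∂₁∂₂²w = -∂₂²w · ∂₂³w ≠ 0`,
neither `∂₂²w` nor `∂₂³w` vanishes, so all denominators can be cleared.
-/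

open scoped ContDiff Topology

section PartialDerivatives

variable {f g : ℝ × ℝ → ℝ} {p : ℝ × ℝ} {m n : WithTop ℕ∞}

theorem DifferentiableAt.hasDerivAt_d1_fderiv (hf : DifferentiableAt ℝ f p) :
    HasDerivAt (fun s => f (s, p.2)) (fderiv ℝ f p (1, 0)) p.1 :=
  hf.hasFDerivAt.comp_hasDerivAt p.1 ((hasDerivAt_id p.1).prodMk (hasDerivAt_const p.1 p.2))

theorem DifferentiableAt.hasDerivAt_d2_fderiv (hf : DifferentiableAt ℝ f p) :
    HasDerivAt (fun s => f (p.1, s)) (fderiv ℝ f p (0, 1)) p.2 :=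
  hf.hasFDerivAt.comp_hasDerivAt p.2 ((hasDerivAt_const p.2 p.1).prodMk (hasDerivAt_id p.2))

theorem DifferentiableAt.hasDerivAt_d1 (hf : DifferentiableAt ℝ f p) :
    HasDerivAt (fun s => f (s, p.2)) (d1 f p) p.1 :=
  hf.hasDerivAt_d1_fderiv.differentiableAt.hasDerivAt

theorem DifferentiableAt.hasDerivAt_d2 (hf : DifferentiableAt ℝ f p) :
    HasDerivAt (fun s => f (p.1, s)) (d2 f p) p.2 :=
  hf.hasDerivAt_d2_fderiv.differentiableAt.hasDerivAt

theorem DifferentiableAt.d1_eq_fderiv (hf : DifferentiableAt ℝ f p) :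
    d1 f p = fderiv ℝ f p (1, 0) :=
  hf.hasDerivAt_d1_fderiv.deriv

theorem DifferentiableAt.d2_eq_fderiv (hf : DifferentiableAt ℝ f p) :
    d2 f p = fderiv ℝ f p (0, 1) :=
  hf.hasDerivAt_d2_fderiv.deriv

theorem Filter.EventuallyEq.d1_eq (h : f =ᶠ[𝓝 p] g) : d1 f p = d1 g p :=
  (h.comp_tendsto (Continuous.tendsto' (by fun_prop) p.1 p rfl)).deriv_eq

theorem Filter.EventuallyEq.d2_eq (h : f =ᶠ[𝓝 p] g) : d2 f p = d2 g p :=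
  (h.comp_tendsto (Continuous.tendsto' (by fun_prop) p.2 p rfl)).deriv_eq

theorem d1_eq_zero_of_eventuallyEq_zero (h : f =ᶠ[𝓝 p] 0) : d1 f p = 0 :=
  h.d1_eq.trans (deriv_const _ _)

theorem d2_eq_zero_of_eventuallyEq_zero (h : f =ᶠ[𝓝 p] 0) : d2 f p = 0 :=
  h.d2_eq.trans (deriv_const _ _)

theorem ContDiffAt.eventually_differentiableAt (hf : ContDiffAt ℝ n f p) (hn : 1 ≤ n) :
    ∀ᶠ q in 𝓝 p, DifferentiableAt ℝ f q :=
  ((hf.of_le hn).eventually (by simp)).mono fun _ hq => hq.differentiableAt one_ne_zero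

theorem ContDiffAt.d1_eventuallyEq_fderiv (hf : ContDiffAt ℝ n f p) (hn : 1 ≤ n) :
    d1 f =ᶠ[𝓝 p] fun q => fderiv ℝ f q (1, 0) :=
  (hf.eventually_differentiableAt hn).mono fun _ hq => hq.d1_eq_fderiv

theorem ContDiffAt.d2_eventuallyEq_fderiv (hf : ContDiffAt ℝ n f p) (hn : 1 ≤ n) :
    d2 f =ᶠ[𝓝 p] fun q => fderiv ℝ f q (0, 1) :=
  (hf.eventually_differentiableAt hn).mono fun _ hq => hq.d2_eq_fderiv

theorem ContDiffAt.contDiffAt_d1 (hf : ContDiffAt ℝ n f p) (hmn : m + 1 ≤ n) :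
    ContDiffAt ℝ m (d1 f) p :=
  ((hf.fderiv_right hmn).clm_apply contDiffAt_const).congr_of_eventuallyEq
    (hf.d1_eventuallyEq_fderiv (le_trans le_add_self hmn))

theorem ContDiffAt.contDiffAt_d2 (hf : ContDiffAt ℝ n f p) (hmn : m + 1 ≤ n) :
    ContDiffAt ℝ m (d2 f) p :=
  ((hf.fderiv_right hmn).clm_apply contDiffAt_const).congr_of_eventuallyEq
    (hf.d2_eventuallyEq_fderiv (le_trans le_add_self hmn))

theorem ContDiffAt.d1_d2_comm (hf : ContDiffAt ℝ n f p) (hn : 2 ≤ n) :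
    d1 (d2 f) p = d2 (d1 f) p := by
  have h1 : 1 ≤ n := le_trans one_le_two hn
  have hdf : DifferentiableAt ℝ (fderiv ℝ f) p :=
    (hf.fderiv_right (m := 1) hn).differentiableAt one_ne_zero
  have hdf_apply (v : ℝ × ℝ) : DifferentiableAt ℝ (fun q => fderiv ℝ f q v) p :=
    hdf.clm_apply (differentiableAt_const v)
  have fderiv_apply (v u : ℝ × ℝ) :
      fderiv ℝ (fun q => fderiv ℝ f q v) p u = fderiv ℝ (fderiv ℝ f) p u v := by
    simp [fderiv_clm_apply hdf (differentiableAt_const v)]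
  rw [(hf.d2_eventuallyEq_fderiv h1).d1_eq, (hf.d1_eventuallyEq_fderiv h1).d2_eq,
    (hdf_apply _).d1_eq_fderiv, (hdf_apply _).d2_eq_fderiv, fderiv_apply, fderiv_apply]
  exact hf.isSymmSndFDerivAt (by simpa using hn) _ _

theorem ContDiffAt.contDiffAt_zetaInt {w : ℝ × ℝ → ℝ} (hw : ContDiffAt ℝ ∞ w p) :
    ContDiffAt ℝ ∞ (zetaInt w) p := by
  have hw₂ : ContDiffAt ℝ ∞ (d2 w) p := hw.contDiffAt_d2 (by simp)
  have hw₁₂ : ContDiffAt ℝ ∞ (d1 (d2 w)) p := hw₂.contDiffAt_d1 (by simp)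
  have hH : ContDiffAt ℝ ∞ (d2 (d2 w)) p := hw₂.contDiffAt_d2 (by simp)
  unfold zetaInt
  fun_prop

end PartialDerivatives

noncomputable def currentI₁ (w : ℝ × ℝ → ℝ) (q : ℝ × ℝ) : ℝ :=
  (d2 (d2 w) q) ^ 5 / (24 * d1 (d2 (d2 w)) q) + (1 / 2) * d2 w q * (d2 (d2 w) q) ^ 2

noncomputable def currentI₂ (w : ℝ × ℝ → ℝ) (q : ℝ × ℝ) : ℝ :=
  (d2 (d2 w) q) ^ 6 / (24 * d1 (d2 (d2 w)) q) - q.2 * (zetaInt w q) ^ 2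
    + (1 / 3) * d2 w q * (d2 (d2 w) q) ^ 3 + d1 w q * zetaInt w q

noncomputable def currentII₁ (w : ℝ × ℝ → ℝ) (q : ℝ × ℝ) : ℝ :=
  -((d2 (d2 w) q) ^ 5 / (24 * d1 (d2 (d2 w)) q)) * (q.1 + d2 (d2 w) q / (3 * d1 (d2 (d2 w)) q))
    - (1 / 2) * d2 w q * (q.1 * (d2 (d2 w) q) ^ 2 + d2 w q)

noncomputable def currentII₂ (w : ℝ × ℝ → ℝ) (q : ℝ × ℝ) : ℝ :=
  -((d2 (d2 w) q) ^ 6 / (24 * d1 (d2 (d2 w)) q)) * (q.1 + d2 (d2 w) q / (3 * d1 (d2 (d2 w)) q))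
    + q.1 * q.2 * (zetaInt w q) ^ 2 - (1 / 3) * q.1 * d2 w q * (d2 (d2 w) q) ^ 3
    - q.1 * d1 w q * zetaInt w q + w q * zetaInt w q

namespace IsRedSolOn

variable {U : Set (ℝ × ℝ)} {w : ℝ × ℝ → ℝ} {p : ℝ × ℝ}

theorem contDiffAt (hw : IsRedSolOn w U) (hU : IsOpen U) (hp : p ∈ U) : ContDiffAt ℝ ∞ w p :=
  hw.1.contDiffAt (hU.mem_nhds hp)

theorem d1_d2_d2_eq (hw : IsRedSolOn w U) (hp : p ∈ U) :
    d1 (d2 (d2 w)) p = -(d2 (d2 w) p * d2 (d2 (d2 w)) p) :=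
  eq_neg_of_add_eq_zero_left (hw.2 p hp)

theorem d2_d2_ne_zero_and_d2_d2_d2_ne_zero (hw : IsRedSolOn w U) (hp : p ∈ U)
    (hB : d1 (d2 (d2 w)) p ≠ 0) : d2 (d2 w) p ≠ 0 ∧ d2 (d2 (d2 w)) p ≠ 0 :=
  mul_ne_zero_iff.1 (neg_ne_zero.1 (hw.d1_d2_d2_eq hp ▸ hB))

theorem eventuallyEq_zero (hw : IsRedSolOn w U) (hU : IsOpen U) (hp : p ∈ U) :
    (fun q => d1 (d2 (d2 w)) q + d2 (d2 w) q * d2 (d2 (d2 w)) q) =ᶠ[𝓝 p] 0 :=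
  Filter.eventually_of_mem (hU.mem_nhds hp) hw.2

theorem d2_d1_d2_d2_eq (hw : IsRedSolOn w U) (hU : IsOpen U) (hp : p ∈ U) :
    d2 (d1 (d2 (d2 w))) p
      = -(d2 (d2 (d2 w)) p * d2 (d2 (d2 w)) p) - d2 (d2 w) p * d2 (d2 (d2 (d2 w))) p := by
  have hH : ContDiffAt ℝ ∞ (d2 (d2 w)) p :=
    ((hw.contDiffAt hU hp).contDiffAt_d2 (m := ∞) (by simp)).contDiffAt_d2 (by simp)
  have hB : ContDiffAt ℝ ∞ (d1 (d2 (d2 w))) p := hH.contDiffAt_d1 (by simp)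
  have hH₂ : ContDiffAt ℝ ∞ (d2 (d2 (d2 w))) p := hH.contDiffAt_d2 (by simp)
  have hderiv : d2 (fun q => d1 (d2 (d2 w)) q + d2 (d2 w) q * d2 (d2 (d2 w)) q) p
      = d2 (d1 (d2 (d2 w))) p + (d2 (d2 (d2 w)) p * d2 (d2 (d2 w)) p
          + d2 (d2 w) p * d2 (d2 (d2 (d2 w))) p) :=
    ((hB.differentiableAt (by simp)).hasDerivAt_d2.add
      ((hH.differentiableAt (by simp)).hasDerivAt_d2.mul
        (hH₂.differentiableAt (by simp)).hasDerivAt_d2)).deriv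
  have hzero := d2_eq_zero_of_eventuallyEq_zero (hw.eventuallyEq_zero hU hp)
  linarith

theorem d1_d1_d2_d2_eq (hw : IsRedSolOn w U) (hU : IsOpen U) (hp : p ∈ U) :
    d1 (d1 (d2 (d2 w))) p
      = -(d1 (d2 (d2 w)) p * d2 (d2 (d2 w)) p) - d2 (d2 w) p * d2 (d1 (d2 (d2 w))) p := by
  have hH : ContDiffAt ℝ ∞ (d2 (d2 w)) p :=
    ((hw.contDiffAt hU hp).contDiffAt_d2 (m := ∞) (by simp)).contDiffAt_d2 (by simp)
  have hB : ContDiffAt ℝ ∞ (d1 (d2 (d2 w))) p := hH.contDiffAt_d1 (by simp)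
  have hH₂ : ContDiffAt ℝ ∞ (d2 (d2 (d2 w))) p := hH.contDiffAt_d2 (by simp)
  have hderiv : d1 (fun q => d1 (d2 (d2 w)) q + d2 (d2 w) q * d2 (d2 (d2 w)) q) p
      = d1 (d1 (d2 (d2 w))) p + (d1 (d2 (d2 w)) p * d2 (d2 (d2 w)) p
          + d2 (d2 w) p * d1 (d2 (d2 (d2 w))) p) :=
    ((hB.differentiableAt (by simp)).hasDerivAt_d1.add
      ((hH.differentiableAt (by simp)).hasDerivAt_d1.mul
        (hH₂.differentiableAt (by simp)).hasDerivAt_d1)).deriv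
  have hzero := d1_eq_zero_of_eventuallyEq_zero (hw.eventuallyEq_zero hU hp)
  rw [hH.d1_d2_comm (WithTop.coe_le_coe.2 le_top)] at hderiv
  linarith

theorem d2_zetaInt (hw : IsRedSolOn w U) (hU : IsOpen U) (hp : p ∈ U) :
    d2 (zetaInt w) p = 0 := by
  have hw₂ : ContDiffAt ℝ ∞ (d2 w) p := (hw.contDiffAt hU hp).contDiffAt_d2 (by simp)
  have hH : ContDiffAt ℝ ∞ (d2 (d2 w)) p := hw₂.contDiffAt_d2 (by simp)
  have hw₁₂ : ContDiffAt ℝ ∞ (d1 (d2 w)) p := hw₂.contDiffAt_d1 (by simp)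
  have hderiv : d2 (zetaInt w) p
      = d2 (d1 (d2 w)) p + 1 / 2 * ((2 : ℕ) * d2 (d2 w) p ^ (2 - 1) * d2 (d2 (d2 w)) p) :=
    ((hw₁₂.differentiableAt (by simp)).hasDerivAt_d2.add
      (((hH.differentiableAt (by simp)).hasDerivAt_d2.pow 2).const_mul (1 / 2))).deriv
  rw [hderiv, ← hw₂.d1_d2_comm (WithTop.coe_le_coe.2 le_top), hw.d1_d2_d2_eq hp]
  ring

theorem d1_currentI₁_add_d2_currentI₂ (hw : IsRedSolOn w U) (hU : IsOpen U) (hp : p ∈ U)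
    (hB_ne : d1 (d2 (d2 w)) p ≠ 0) :
    d1 (currentI₁ w) p + d2 (currentI₂ w) p = 0 := by
  have hw₀ := hw.contDiffAt hU hp
  have hw₂ : ContDiffAt ℝ ∞ (d2 w) p := hw₀.contDiffAt_d2 (by simp)
  have hH : ContDiffAt ℝ ∞ (d2 (d2 w)) p := hw₂.contDiffAt_d2 (by simp)
  have dw₁ := (hw₀.contDiffAt_d1 (m := ∞) (by simp)).differentiableAt (by simp)
  have dw₂ := hw₂.differentiableAt (by simp)
  have dH := hH.differentiableAt (by simp)
  have dB := (hH.contDiffAt_d1 (m := ∞) (by simp)).differentiableAt (by simp)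
  have dζ := hw₀.contDiffAt_zetaInt.differentiableAt (by simp)
  have h24 : 24 * d1 (d2 (d2 w)) p ≠ 0 := mul_ne_zero (by norm_num) hB_ne
  have e1 : d1 (currentI₁ w) p = _ :=
    (((dH.hasDerivAt_d1.pow 5).div (dB.hasDerivAt_d1.const_mul 24) h24).add
      ((dw₂.hasDerivAt_d1.const_mul (1 / 2)).mul (dH.hasDerivAt_d1.pow 2))).deriv
  have e2 : d2 (currentI₂ w) p = _ :=
    (((((dH.hasDerivAt_d2.pow 6).div (dB.hasDerivAt_d2.const_mul 24) h24).sub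
      ((hasDerivAt_id p.2).mul (dζ.hasDerivAt_d2.pow 2))).add
      ((dw₂.hasDerivAt_d2.const_mul (1 / 3)).mul (dH.hasDerivAt_d2.pow 3))).add
      (dw₁.hasDerivAt_d2.mul dζ.hasDerivAt_d2)).deriv
  obtain ⟨hH_ne, hH₂_ne⟩ := hw.d2_d2_ne_zero_and_d2_d2_d2_ne_zero hp hB_ne
  rw [e1, e2]
  simp only [Pi.pow_apply, Prod.mk.eta, id_eq]
  rw [hw.d2_zetaInt hU hp, hw.d1_d1_d2_d2_eq hU hp, hw.d2_d1_d2_d2_eq hU hp,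
    ← hw₀.d1_d2_comm (WithTop.coe_le_coe.2 le_top), hw.d1_d2_d2_eq hp]
  unfold zetaInt
  field_simp
  ring

theorem d1_currentII₁_add_d2_currentII₂ (hw : IsRedSolOn w U) (hU : IsOpen U) (hp : p ∈ U)
    (hB_ne : d1 (d2 (d2 w)) p ≠ 0) :
    d1 (currentII₁ w) p + d2 (currentII₂ w) p = 0 := by
  have hw₀ := hw.contDiffAt hU hp
  have hw₂ : ContDiffAt ℝ ∞ (d2 w) p := hw₀.contDiffAt_d2 (by simp)
  have hH : ContDiffAt ℝ ∞ (d2 (d2 w)) p := hw₂.contDiffAt_d2 (by simp)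
  have dw₀ := hw₀.differentiableAt (by simp)
  have dw₁ := (hw₀.contDiffAt_d1 (m := ∞) (by simp)).differentiableAt (by simp)
  have dw₂ := hw₂.differentiableAt (by simp)
  have dH := hH.differentiableAt (by simp)
  have dB := (hH.contDiffAt_d1 (m := ∞) (by simp)).differentiableAt (by simp)
  have dζ := hw₀.contDiffAt_zetaInt.differentiableAt (by simp)
  have h24 : 24 * d1 (d2 (d2 w)) p ≠ 0 := mul_ne_zero (by norm_num) hB_ne
  have h3 : 3 * d1 (d2 (d2 w)) p ≠ 0 := mul_ne_zero (by norm_num) hB_ne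
  have e1 : d1 (currentII₁ w) p = _ :=
    ((((dH.hasDerivAt_d1.pow 5).div (dB.hasDerivAt_d1.const_mul 24) h24).neg.mul
      ((hasDerivAt_id p.1).add (dH.hasDerivAt_d1.div (dB.hasDerivAt_d1.const_mul 3) h3))).sub
      ((dw₂.hasDerivAt_d1.const_mul (1 / 2)).mul
        (((hasDerivAt_id p.1).mul (dH.hasDerivAt_d1.pow 2)).add dw₂.hasDerivAt_d1))).deriv
  have e2 : d2 (currentII₂ w) p = _ :=
    (((((((dH.hasDerivAt_d2.pow 6).div (dB.hasDerivAt_d2.const_mul 24) h24).neg.mul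
      ((hasDerivAt_const p.2 p.1).add
        (dH.hasDerivAt_d2.div (dB.hasDerivAt_d2.const_mul 3) h3))).add
      (((hasDerivAt_id p.2).const_mul p.1).mul (dζ.hasDerivAt_d2.pow 2))).sub
      ((dw₂.hasDerivAt_d2.const_mul (1 / 3 * p.1)).mul (dH.hasDerivAt_d2.pow 3))).sub
      ((dw₁.hasDerivAt_d2.const_mul p.1).mul dζ.hasDerivAt_d2)).add
      (dw₀.hasDerivAt_d2.mul dζ.hasDerivAt_d2)).deriv
  obtain ⟨hH_ne, hH₂_ne⟩ := hw.d2_d2_ne_zero_and_d2_d2_d2_ne_zero hp hB_ne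
  rw [e1, e2]
  simp only [Pi.add_apply, Pi.mul_apply, Pi.div_apply, Pi.neg_apply, Pi.pow_apply, Prod.mk.eta,
    id_eq]
  rw [hw.d2_zetaInt hU hp, hw.d1_d1_d2_d2_eq hU hp, hw.d2_d1_d2_d2_eq hU hp,
    ← hw₀.d1_d2_comm (WithTop.coe_le_coe.2 le_top), hw.d1_d2_d2_eq hp]
  unfold zetaInt
  field_simp
  ring

end IsRedSolOn

/-- Two particular conserved currents of the reduced equation along a
solution `w` with `∂₁∂₂²w ≠ 0` on `U`. -/
theorem statement13 (U : Set (ℝ × ℝ)) (hU : IsOpen U) (w : ℝ × ℝ → ℝ)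
    (hred : IsRedSolOn w U) (h122 : ∀ p ∈ U, d1 (d2 (d2 w)) p ≠ 0) :
    (∀ p ∈ U,
      d1 (fun q => (d2 (d2 w) q) ^ 5 / (24 * d1 (d2 (d2 w)) q)
          + (1 / 2) * d2 w q * (d2 (d2 w) q) ^ 2) p
        + d2 (fun q => (d2 (d2 w) q) ^ 6 / (24 * d1 (d2 (d2 w)) q)
          - q.2 * (zetaInt w q) ^ 2 + (1 / 3) * d2 w q * (d2 (d2 w) q) ^ 3
          + d1 w q * zetaInt w q) p = 0) ∧
    (∀ p ∈ U,
      d1 (fun q => -((d2 (d2 w) q) ^ 5 / (24 * d1 (d2 (d2 w)) q))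
            * (q.1 + d2 (d2 w) q / (3 * d1 (d2 (d2 w)) q))
          - (1 / 2) * d2 w q * (q.1 * (d2 (d2 w) q) ^ 2 + d2 w q)) p
        + d2 (fun q => -((d2 (d2 w) q) ^ 6 / (24 * d1 (d2 (d2 w)) q))
            * (q.1 + d2 (d2 w) q / (3 * d1 (d2 (d2 w)) q))
          + q.1 * q.2 * (zetaInt w q) ^ 2
          - (1 / 3) * q.1 * d2 w q * (d2 (d2 w) q) ^ 3
          - q.1 * d1 w q * zetaInt w q + w q * zetaInt w q) p = 0) :=
  ⟨fun p hp => hred.d1_currentI₁_add_d2_currentI₂ hU hp (h122 p hp),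
    fun p hp => hred.d1_currentII₁_add_d2_currentII₂ hU hp (h122 p hp)⟩
end

section
/- Let Ω := {(z₁,z₂) ∈ ℝ² : z₂² < z₁² + 1} and write S := (z₁² + 1 − z₂²)^{1/2}. Then the function h(z₁,z₂) := (z₁z₂ + S)/(z₁² + 1) is a smooth solution of the inviscid Burgers equation ∂₁h + h·∂₂h = 0 on Ω, and the function w(z₁,z₂) := z₁z₂³/(6(z₁² + 1)) + (z₂/2)·arctan(z₂/S) + (1/6)(2 + z₂²/(z₁² + 1))·S is a smooth solution of the reduced equation ∂₁∂₂²w + (∂₂²w)·(∂₂³w) = 0 on Ω. -/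
/-! With `S² = z₁² + 1 - z₂²`, the Burgers equation for `h` is a polynomial identity in
`z₁, z₂, S`. For `w`, one computes `∂₂w = g` and `∂₂g = h` with
`g = z₁z₂²/(2(z₁² + 1)) + arctan(z₂/S)/2 + z₂S/(2(z₁² + 1))`; since `Ω` is open, the reduced
equation for `w` is then the Burgers equation for `h = ∂₂²w`. -/

open Real Set

lemma d1_congr {f g : ℝ × ℝ → ℝ} {U : Set (ℝ × ℝ)} (hU : IsOpen U) (hfg : EqOn f g U)
    {p : ℝ × ℝ} (hp : p ∈ U) : d1 f p = d1 g p :=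
  ((hfg.eventuallyEq_of_mem (hU.mem_nhds hp)).comp_tendsto
    ((continuous_id.prodMk continuous_const).tendsto' p.1 p rfl)).deriv_eq

lemma d2_congr {f g : ℝ × ℝ → ℝ} {U : Set (ℝ × ℝ)} (hU : IsOpen U) (hfg : EqOn f g U)
    {p : ℝ × ℝ} (hp : p ∈ U) : d2 f p = d2 g p :=
  ((hfg.eventuallyEq_of_mem (hU.mem_nhds hp)).comp_tendsto
    ((continuous_const.prodMk continuous_id).tendsto' p.2 p rfl)).deriv_eq

lemma isRedSolOn_of_eqOn_d2_d2 {w h : ℝ × ℝ → ℝ} {U : Set (ℝ × ℝ)} (hU : IsOpen U)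
    (hw : ContDiffOn ℝ (⊤ : ℕ∞) w U) (hwh : EqOn (d2 (d2 w)) h U)
    (hh : ∀ p ∈ U, d1 h p + h p * d2 h p = 0) : IsRedSolOn w U := by
  refine ⟨hw, fun p hp => ?_⟩
  rw [d1_congr hU hwh hp, d2_congr hU hwh hp, hwh hp]
  exact hh p hp

section Slices

variable {c t : ℝ}

lemma hasDerivAt_sqrt_sub_sq (ht : t ^ 2 < c) :
    HasDerivAt (fun t => √(c - t ^ 2)) (-t / √(c - t ^ 2)) t := by
  have hsq : HasDerivAt (fun t => c - t ^ 2) (-(2 * t)) t := by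
    simpa using (hasDerivAt_pow 2 t).const_sub c
  convert (hsq.sqrt (sub_pos.2 ht).ne') using 1
  field_simp

/-- `arctan (t / √(c - t²)) = arcsin (t / √c)`. -/
lemma hasDerivAt_arctan_div_sqrt_sub_sq (ht : t ^ 2 < c) :
    HasDerivAt (fun t => arctan (t / √(c - t ^ 2))) (1 / √(c - t ^ 2)) t := by
  have hR : 0 < √(c - t ^ 2) := sqrt_pos.2 (sub_pos.2 ht)
  have hR2 : √(c - t ^ 2) ^ 2 = c - t ^ 2 := sq_sqrt (sub_pos.2 ht).le
  refine ((hasDerivAt_id' t).fun_div (hasDerivAt_sqrt_sub_sq ht) hR.ne').arctan.congr_deriv ?_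
  field_simp
  rw [hR2]
  ring

lemma hasDerivAt_burgersSol_snd (a : ℝ) (ht : t ^ 2 < c) :
    HasDerivAt (fun t => (a * t + √(c - t ^ 2)) / c) ((a - t / √(c - t ^ 2)) / c) t := by
  refine (((hasDerivAt_id' t).const_mul a).fun_add (hasDerivAt_sqrt_sub_sq ht)).div_const c
    |>.congr_deriv ?_
  ring

lemma hasDerivAt_redSol_snd (a : ℝ) (ht : t ^ 2 < c) :
    HasDerivAt
      (fun t => a * t ^ 3 / (6 * c) + t / 2 * arctan (t / √(c - t ^ 2))
        + 1 / 6 * (2 + t ^ 2 / c) * √(c - t ^ 2))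
      (a * t ^ 2 / (2 * c) + 1 / 2 * arctan (t / √(c - t ^ 2)) + t * √(c - t ^ 2) / (2 * c))
      t := by
  have hc : 0 < c := lt_of_le_of_lt (sq_nonneg t) ht
  have hR : 0 < √(c - t ^ 2) := sqrt_pos.2 (sub_pos.2 ht)
  have hR2 : √(c - t ^ 2) ^ 2 = c - t ^ 2 := sq_sqrt (sub_pos.2 ht).le
  have hcubic := ((hasDerivAt_pow 3 t).const_mul a).div_const (6 * c)
  have harctan := ((hasDerivAt_id' t).div_const 2).fun_mul (hasDerivAt_arctan_div_sqrt_sub_sq ht)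
  have hroot := ((((hasDerivAt_pow 2 t).div_const c).const_add 2).const_mul (1 / 6 : ℝ)).fun_mul
    (hasDerivAt_sqrt_sub_sq ht)
  refine ((hcubic.fun_add harctan).fun_add hroot).congr_deriv ?_
  field_simp
  linear_combination (-2 * t) * hR2

lemma hasDerivAt_redSolD2_snd (a : ℝ) (ht : t ^ 2 < c) :
    HasDerivAt
      (fun t => a * t ^ 2 / (2 * c) + 1 / 2 * arctan (t / √(c - t ^ 2))
        + t * √(c - t ^ 2) / (2 * c))
      ((a * t + √(c - t ^ 2)) / c) t := by
  have hc : 0 < c := lt_of_le_of_lt (sq_nonneg t) ht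
  have hR : 0 < √(c - t ^ 2) := sqrt_pos.2 (sub_pos.2 ht)
  have hR2 : √(c - t ^ 2) ^ 2 = c - t ^ 2 := sq_sqrt (sub_pos.2 ht).le
  have hquad := ((hasDerivAt_pow 2 t).const_mul a).div_const (2 * c)
  have harctan := (hasDerivAt_arctan_div_sqrt_sub_sq ht).const_mul (1 / 2 : ℝ)
  have hroot := ((hasDerivAt_id' t).fun_mul (hasDerivAt_sqrt_sub_sq ht)).div_const (2 * c)
  refine ((hquad.fun_add harctan).fun_add hroot).congr_deriv ?_
  field_simp
  linear_combination -hR2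

end Slices

lemma hasDerivAt_burgersSol_fst {x y : ℝ} (h : y ^ 2 < x ^ 2 + 1) :
    HasDerivAt (fun s => (s * y + √(s ^ 2 + 1 - y ^ 2)) / (s ^ 2 + 1))
      (((y + x / √(x ^ 2 + 1 - y ^ 2)) * (x ^ 2 + 1)
          - (x * y + √(x ^ 2 + 1 - y ^ 2)) * (2 * x)) / (x ^ 2 + 1) ^ 2) x := by
  have hden : HasDerivAt (fun s => s ^ 2 + 1) (2 * x) x := by
    simpa using (hasDerivAt_pow 2 x).add_const 1
  have hroot := (hden.sub_const (y ^ 2)).sqrt (sub_pos.2 h).ne'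
  refine (((hasDerivAt_id' x).mul_const y).fun_add hroot).fun_div hden (by positivity)
    |>.congr_deriv ?_
  field_simp

def Ω : Set (ℝ × ℝ) := {p | p.2 ^ 2 < p.1 ^ 2 + 1}

lemma isOpen_Ω : IsOpen Ω :=
  isOpen_lt (by fun_prop) (by fun_prop)

lemma radicand_pos {p : ℝ × ℝ} (hp : p ∈ Ω) : 0 < p.1 ^ 2 + 1 - p.2 ^ 2 :=
  sub_pos.2 hp

lemma sqrt_radicand_pos {p : ℝ × ℝ} (hp : p ∈ Ω) : 0 < √(p.1 ^ 2 + 1 - p.2 ^ 2) :=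
  sqrt_pos.2 (radicand_pos hp)

noncomputable def burgersSol (p : ℝ × ℝ) : ℝ :=
  (p.1 * p.2 + √(p.1 ^ 2 + 1 - p.2 ^ 2)) / (p.1 ^ 2 + 1)

noncomputable def redSolD2 (p : ℝ × ℝ) : ℝ :=
  p.1 * p.2 ^ 2 / (2 * (p.1 ^ 2 + 1)) + 1 / 2 * arctan (p.2 / √(p.1 ^ 2 + 1 - p.2 ^ 2))
    + p.2 * √(p.1 ^ 2 + 1 - p.2 ^ 2) / (2 * (p.1 ^ 2 + 1))

noncomputable def redSol (p : ℝ × ℝ) : ℝ :=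
  p.1 * p.2 ^ 3 / (6 * (p.1 ^ 2 + 1)) + p.2 / 2 * arctan (p.2 / √(p.1 ^ 2 + 1 - p.2 ^ 2))
    + 1 / 6 * (2 + p.2 ^ 2 / (p.1 ^ 2 + 1)) * √(p.1 ^ 2 + 1 - p.2 ^ 2)

attribute [local fun_prop] contDiff_arctan

lemma burgersSol_isBurgersSolOn : IsBurgersSolOn burgersSol Ω := by
  refine ⟨?_, fun p (hp : p.2 ^ 2 < p.1 ^ 2 + 1) => ?_⟩
  · unfold burgersSol
    fun_prop (disch :=
      intro p hp
      first
        | positivity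
        | exact (radicand_pos hp).ne'
        | exact (sqrt_radicand_pos hp).ne')
  have hR := sqrt_radicand_pos hp
  have hR2 : √(p.1 ^ 2 + 1 - p.2 ^ 2) ^ 2 = p.1 ^ 2 + 1 - p.2 ^ 2 := sq_sqrt (radicand_pos hp).le
  have hd1 : d1 burgersSol p = _ := (hasDerivAt_burgersSol_fst hp).deriv
  have hd2 : d2 burgersSol p = _ := (hasDerivAt_burgersSol_snd p.1 hp).deriv
  rw [hd1, hd2, burgersSol]
  field_simp
  linear_combination -p.1 * hR2

lemma eqOn_d2_redSol : EqOn (d2 redSol) redSolD2 Ω :=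
  fun p (hp : p.2 ^ 2 < p.1 ^ 2 + 1) => (hasDerivAt_redSol_snd p.1 hp).deriv

lemma eqOn_d2_redSolD2 : EqOn (d2 redSolD2) burgersSol Ω :=
  fun p (hp : p.2 ^ 2 < p.1 ^ 2 + 1) => (hasDerivAt_redSolD2_snd p.1 hp).deriv

lemma redSol_isRedSolOn : IsRedSolOn redSol Ω := by
  refine isRedSolOn_of_eqOn_d2_d2 isOpen_Ω ?_
    (fun p hp => (d2_congr isOpen_Ω eqOn_d2_redSol hp).trans (eqOn_d2_redSolD2 hp))
    burgersSol_isBurgersSolOn.2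
  unfold redSol
  fun_prop (disch :=
    intro p hp
    first
      | positivity
      | exact (radicand_pos hp).ne'
      | exact (sqrt_radicand_pos hp).ne')

/-- Solutions obtained by reduction 1.8⁰: the solution
`h = (z₁z₂ + √(z₁² + 1 − z₂²))/(z₁² + 1)` of the inviscid Burgers equation and the
corresponding solution `w` of the reduced equation on `Ω = {z₂² < z₁² + 1}`. -/
theorem statement17 :
    IsBurgersSolOn (fun p =>
        (p.1 * p.2 + Real.sqrt (p.1 ^ 2 + 1 - p.2 ^ 2)) / (p.1 ^ 2 + 1))
      {p : ℝ × ℝ | p.2 ^ 2 < p.1 ^ 2 + 1} ∧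
    IsRedSolOn (fun p =>
        p.1 * p.2 ^ 3 / (6 * (p.1 ^ 2 + 1))
          + p.2 / 2 * Real.arctan (p.2 / Real.sqrt (p.1 ^ 2 + 1 - p.2 ^ 2))
          + (1 / 6) * (2 + p.2 ^ 2 / (p.1 ^ 2 + 1)) * Real.sqrt (p.1 ^ 2 + 1 - p.2 ^ 2))
      {p : ℝ × ℝ | p.2 ^ 2 < p.1 ^ 2 + 1} :=
  ⟨burgersSol_isBurgersSolOn, redSol_isRedSolOn⟩
end

section
/- Let Ω ⊆ ℝ² be open and ζ : Ω → ℝ a smooth function satisfying ζ(z₁,z₂)·exp(ζ(z₁,z₂)) = exp(−z₁)·z₂ on Ω, with ζ ≠ 0 and ζ ≠ −1 everywhere on Ω (so ζ is a branch of the Lambert W function of e^{−z₁}z₂). Then the function h := −z₂/ζ is a smooth solution of the inviscid Burgers equation ∂₁h + h·∂₂h = 0 on Ω, and the function w := −z₂³·(18ζ² + 15ζ + 4)/(108ζ³) is a smooth solution of the reduced equation ∂₁∂₂²w + (∂₂²w)·(∂₂³w) = 0 on Ω. -/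
/-!
On a branch `ζ = W(e^{-z₁} z₂)` implicit differentiation of `ζ e^ζ = e^{-z₁} z₂` gives
`∂₁ζ = -ζ/(1+ζ)` and `∂₂ζ = ζ/(z₂(1+ζ))`. With these, `h = -z₂/ζ` has `∂₁h = -z₂/(ζ(1+ζ))` and
`∂₂h = -1/(1+ζ)`, so `∂₁h + h ∂₂h = 0`. The function `w` is a second antiderivative of `h`
in `z₂`: `∂₂w = -z₂²(2ζ+1)/(4ζ²)` and `∂₂²w = h`, so the reduced equation for `w` is Burgers'
equation for `h`.
-/

open Filter Topology Set Real

section PartialDerivatives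

variable {U : Set (ℝ × ℝ)} {p : ℝ × ℝ}

lemma IsOpen.eventually_mem_left (hU : IsOpen U) (hp : p ∈ U) : ∀ᶠ s in 𝓝 p.1, (s, p.2) ∈ U :=
  (continuous_id.prodMk continuous_const).continuousAt.preimage_mem_nhds (hU.mem_nhds hp)

lemma IsOpen.eventually_mem_right (hU : IsOpen U) (hp : p ∈ U) : ∀ᶠ s in 𝓝 p.2, (p.1, s) ∈ U :=
  (continuous_const.prodMk continuous_id).continuousAt.preimage_mem_nhds (hU.mem_nhds hp)

lemma d1_congr_of_eqOn {f g : ℝ × ℝ → ℝ} (hU : IsOpen U) (hfg : EqOn f g U) (hp : p ∈ U) :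
    d1 f p = d1 g p :=
  EventuallyEq.deriv_eq <| (hU.eventually_mem_left hp).mono fun _ hs => hfg hs

lemma d2_congr_of_eqOn {f g : ℝ × ℝ → ℝ} (hU : IsOpen U) (hfg : EqOn f g U) (hp : p ∈ U) :
    d2 f p = d2 g p :=
  EventuallyEq.deriv_eq <| (hU.eventually_mem_right hp).mono fun _ hs => hfg hs

lemma isRedSolOn_of_d2_d2_eqOn {w h : ℝ × ℝ → ℝ} (hU : IsOpen U) (hw : ContDiffOn ℝ (⊤ : ℕ∞) w U)
    (hwh : EqOn (d2 (d2 w)) h U) (hh : IsBurgersSolOn h U) : IsRedSolOn w U :=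
  ⟨hw, fun p hp => by
    rw [d1_congr_of_eqOn hU hwh hp, d2_congr_of_eqOn hU hwh hp, hwh hp]
    exact hh.2 p hp⟩

end PartialDerivatives

lemma DifferentiableAt.hasDerivAt_of_mul_exp_eventuallyEq {u g : ℝ → ℝ} {g' x : ℝ}
    (hu : DifferentiableAt ℝ u x) (hg : HasDerivAt g g' x)
    (hug : (fun s => u s * Real.exp (u s)) =ᶠ[𝓝 x] g) (h1 : u x ≠ -1) :
    HasDerivAt u (g' / (Real.exp (u x) * (1 + u x))) x := by
  have hg' := ((hu.hasDerivAt.mul hu.hasDerivAt.exp).congr_of_eventuallyEq hug.symm).unique hg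
  have h1' : Real.exp (u x) * (1 + u x) ≠ 0 :=
    mul_ne_zero (Real.exp_ne_zero _) fun h => h1 (by linarith)
  refine hu.hasDerivAt.congr_deriv ?_
  rw [eq_div_iff h1', ← hg']
  ring

/-! Along a line `z₂ = y`, a branch `u` of `W(e^{-s} y)` satisfies `u' = -u/(1+u)`. -/

lemma hasDerivAt_const_neg_div {u : ℝ → ℝ} {x : ℝ} (c : ℝ)
    (hu : HasDerivAt u (-u x / (1 + u x)) x) (h0 : u x ≠ 0) :
    HasDerivAt (fun s => -c / u s) (-c / (u x * (1 + u x))) x := by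
  refine ((hasDerivAt_const x (-c)).div hu h0).congr_deriv ?_
  field_simp
  ring

/-! Along a line `z₁ = x`, a branch `v` of `W(e^{-x} s)` satisfies `v' = v/(s(1+v))`. -/

section SecondVariable

variable {v : ℝ → ℝ} {y : ℝ}

lemma hasDerivAt_neg_id_div (hv : HasDerivAt v (v y / (y * (1 + v y))) y) (hy : y ≠ 0)
    (h0 : v y ≠ 0) (h1 : 1 + v y ≠ 0) : HasDerivAt (fun s => -s / v s) (-1 / (1 + v y)) y := by
  refine ((hasDerivAt_id y).neg.div hv h0).congr_deriv ?_
  simp only [Pi.neg_apply, id_eq]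
  field_simp
  ring

lemma hasDerivAt_neg_sq_mul_div (hv : HasDerivAt v (v y / (y * (1 + v y))) y) (h0 : v y ≠ 0)
    (h1 : 1 + v y ≠ 0) :
    HasDerivAt (fun s => -s ^ 2 * (2 * v s + 1) / (4 * v s ^ 2)) (-y / v y) y := by
  have hN := (hasDerivAt_pow 2 y).neg.mul ((hv.const_mul 2).add_const 1)
  refine (hN.div (hv.pow 2 |>.const_mul 4) (by simp [h0])).congr_deriv ?_
  simp only [Pi.neg_apply, Pi.mul_apply, Pi.pow_apply]
  field_simp
  ring

lemma hasDerivAt_neg_cube_mul_div (hv : HasDerivAt v (v y / (y * (1 + v y))) y) (h0 : v y ≠ 0)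
    (h1 : 1 + v y ≠ 0) :
    HasDerivAt (fun s => -s ^ 3 * (18 * v s ^ 2 + 15 * v s + 4) / (108 * v s ^ 3))
      (-y ^ 2 * (2 * v y + 1) / (4 * v y ^ 2)) y := by
  have hN := (hasDerivAt_pow 3 y).neg.mul
    (((hv.pow 2).const_mul 18).add (hv.const_mul 15) |>.add_const 4)
  refine (hN.div (hv.pow 3 |>.const_mul 108) (by simp [h0])).congr_deriv ?_
  simp only [Pi.neg_apply, Pi.mul_apply, Pi.add_apply, Pi.pow_apply]
  field_simp
  ring

end SecondVariable

section LambertBranch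

variable {Ω : Set (ℝ × ℝ)} {ζ : ℝ × ℝ → ℝ} {x y : ℝ}

lemma snd_ne_zero_of_mul_exp_eq (hW : ζ (x, y) * exp (ζ (x, y)) = exp (-x) * y)
    (h0 : ζ (x, y) ≠ 0) : y ≠ 0 := by
  rintro rfl
  simp_all [exp_ne_zero]

lemma hasDerivAt_left_of_mul_exp_eq (hΩ : IsOpen Ω) (hζ : DifferentiableOn ℝ ζ Ω)
    (hζW : ∀ p ∈ Ω, ζ p * exp (ζ p) = exp (-p.1) * p.2) (hp : (x, y) ∈ Ω)
    (h1 : ζ (x, y) ≠ -1) :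
    HasDerivAt (fun s => ζ (s, y)) (-ζ (x, y) / (1 + ζ (x, y))) x := by
  have hline : DifferentiableAt ℝ (fun s => ζ (s, y)) x :=
    (hζ.differentiableAt (hΩ.mem_nhds hp)).comp x
      (differentiableAt_id.prodMk (differentiableAt_const y))
  have hW : (fun s => ζ (s, y) * exp (ζ (s, y))) =ᶠ[𝓝 x] fun s => exp (-s) * y :=
    (hΩ.eventually_mem_left hp).mono fun s hs => hζW _ hs
  refine (hline.hasDerivAt_of_mul_exp_eventuallyEq ((hasDerivAt_neg x).exp.mul_const y) hW
    h1).congr_deriv ?_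
  have h1' : 1 + ζ (x, y) ≠ 0 := fun h => h1 (by linarith)
  rw [show exp (-x) * -1 * y = -(ζ (x, y) * exp (ζ (x, y))) by linear_combination hζW _ hp]
  field_simp

lemma hasDerivAt_right_of_mul_exp_eq (hΩ : IsOpen Ω) (hζ : DifferentiableOn ℝ ζ Ω)
    (hζW : ∀ p ∈ Ω, ζ p * exp (ζ p) = exp (-p.1) * p.2) (hp : (x, y) ∈ Ω)
    (h0 : ζ (x, y) ≠ 0) (h1 : ζ (x, y) ≠ -1) :
    HasDerivAt (fun s => ζ (x, s)) (ζ (x, y) / (y * (1 + ζ (x, y)))) y := by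
  have hline : DifferentiableAt ℝ (fun s => ζ (x, s)) y :=
    (hζ.differentiableAt (hΩ.mem_nhds hp)).comp y
      ((differentiableAt_const x).prodMk differentiableAt_id)
  have hW : (fun s => ζ (x, s) * exp (ζ (x, s))) =ᶠ[𝓝 y] fun s => exp (-x) * s :=
    (hΩ.eventually_mem_right hp).mono fun s hs => hζW _ hs
  refine (hline.hasDerivAt_of_mul_exp_eventuallyEq ((hasDerivAt_id y).const_mul (exp (-x))) hW
    h1).congr_deriv ?_
  have hy := snd_ne_zero_of_mul_exp_eq (hζW _ hp) h0
  have h1' : 1 + ζ (x, y) ≠ 0 := fun h => h1 (by linarith)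
  rw [mul_one, show exp (-x) = ζ (x, y) * exp (ζ (x, y)) / y by
    rw [eq_div_iff hy]; exact (hζW _ hp).symm]
  field_simp

lemma isBurgersSolOn_neg_snd_div (hΩ : IsOpen Ω) (hζ : ContDiffOn ℝ (⊤ : ℕ∞) ζ Ω)
    (hζW : ∀ p ∈ Ω, ζ p * exp (ζ p) = exp (-p.1) * p.2)
    (hζ0 : ∀ p ∈ Ω, ζ p ≠ 0) (hζ1 : ∀ p ∈ Ω, ζ p ≠ -1) :
    IsBurgersSolOn (fun p => -p.2 / ζ p) Ω := by
  refine ⟨contDiff_snd.neg.contDiffOn.div hζ hζ0, ?_⟩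
  rintro ⟨x, y⟩ hp
  have hdiff := hζ.differentiableOn (by simp)
  have h0 := hζ0 _ hp
  have h1 : 1 + ζ (x, y) ≠ 0 := fun h => hζ1 _ hp (by linarith)
  have hζx := hasDerivAt_left_of_mul_exp_eq hΩ hdiff hζW hp (hζ1 _ hp)
  have hζy := hasDerivAt_right_of_mul_exp_eq hΩ hdiff hζW hp h0 (hζ1 _ hp)
  rw [d1, d2, (hasDerivAt_const_neg_div y hζx h0).deriv,
    (hasDerivAt_neg_id_div hζy (snd_ne_zero_of_mul_exp_eq (hζW _ hp) h0) h0 h1).deriv]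
  field_simp
  ring

end LambertBranch

/-- Solutions obtained by reduction 1.4 in terms of a branch `ζ` of the
Lambert `W` function of `e^{−z₁}z₂`: `h = −z₂/ζ` solves the inviscid Burgers equation and
`w = −z₂³(18ζ² + 15ζ + 4)/(108ζ³)` solves the reduced equation on `Ω`. -/
theorem statement18 (Ω : Set (ℝ × ℝ)) (hΩ : IsOpen Ω)
    (ζ : ℝ × ℝ → ℝ) (hζ : ContDiffOn ℝ (⊤ : ℕ∞) ζ Ω)
    (hζW : ∀ p ∈ Ω, ζ p * Real.exp (ζ p) = Real.exp (-p.1) * p.2)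
    (hζ0 : ∀ p ∈ Ω, ζ p ≠ 0) (hζ1 : ∀ p ∈ Ω, ζ p ≠ -1) :
    IsBurgersSolOn (fun p => -p.2 / ζ p) Ω ∧
    IsRedSolOn (fun p =>
        -p.2 ^ 3 * (18 * (ζ p) ^ 2 + 15 * ζ p + 4) / (108 * (ζ p) ^ 3)) Ω := by
  have hBurgers := isBurgersSolOn_neg_snd_div hΩ hζ hζW hζ0 hζ1
  have hζy : ∀ x y, (x, y) ∈ Ω →
      HasDerivAt (fun s => ζ (x, s)) (ζ (x, y) / (y * (1 + ζ (x, y)))) y := fun _ _ hp =>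
    hasDerivAt_right_of_mul_exp_eq hΩ (hζ.differentiableOn (by simp)) hζW hp (hζ0 _ hp) (hζ1 _ hp)
  have h1 : ∀ p ∈ Ω, 1 + ζ p ≠ 0 := fun p hp h => hζ1 p hp (by linarith)
  have hd2w : EqOn (d2 fun p => -p.2 ^ 3 * (18 * ζ p ^ 2 + 15 * ζ p + 4) / (108 * ζ p ^ 3))
      (fun p => -p.2 ^ 2 * (2 * ζ p + 1) / (4 * ζ p ^ 2)) Ω := by
    rintro ⟨x, y⟩ hp
    exact (hasDerivAt_neg_cube_mul_div (hζy x y hp) (hζ0 _ hp) (h1 _ hp)).deriv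
  refine ⟨hBurgers, isRedSolOn_of_d2_d2_eqOn hΩ ?_ ?_ hBurgers⟩
  · refine (contDiff_snd.pow 3).neg.contDiffOn.mul (by fun_prop) |>.div (by fun_prop) ?_
    exact fun p hp => by simp [hζ0 p hp]
  · rintro ⟨x, y⟩ hp
    rw [d2_congr_of_eqOn hΩ hd2w hp]
    exact (hasDerivAt_neg_sq_mul_div (hζy x y hp) (hζ0 _ hp) (h1 _ hp)).deriv
end
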